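/- arXiv:2303.08281 — 4 statements merged into one kernel-verified Lean document; each statement's English description precedes it below -/
import Mathlib

section
/- The Elvis problem admits a minimizer: the infimum of γ_{F₀}(y − x₀) + γ_{F₁}(x₁ − y) over y ∈ Σ is attained at some point of Σ. -/
open Filter Bornology Metric Topology

/-!
The objective is continuous, since gauges of convex neighbourhoods of `0` are continuous, and
coercive along the axis, since `F₀ ⊆ ball 0 R` forces `gauge F₀ v ≥ ‖v‖ / R`. A continuous
coercive function on `ℝ` attains its infimum.
-/

section Gauge

variable {E : Type*} [SeminormedAddCommGroup E] [NormedSpace ℝ E] {s : Set E}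

theorem norm_div_le_gauge_of_subset_ball {R : ℝ} (hR : 0 < R) (hs : Absorbent ℝ s)
    (hsub : s ⊆ ball 0 R) (v : E) : ‖v‖ / R ≤ gauge s v := by
  simpa only [gauge_ball hR.le] using gauge_mono hs hsub v

theorem tendsto_gauge_cobounded (hs : s ∈ 𝓝 0) (hbd : IsBounded s) :
    Tendsto (gauge s) (cobounded E) atTop := by
  obtain ⟨R, hR, hsub⟩ := hbd.subset_ball_lt 0 0
  exact tendsto_atTop_mono (norm_div_le_gauge_of_subset_ball hR (absorbent_nhds_zero hs) hsub)
    (tendsto_norm_cobounded_atTop.atTop_div_const hR)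

end Gauge

theorem WithLp.tendsto_toLp_fst_cobounded (p : ENNReal) [Fact (1 ≤ p)] (α β : Type*)
    [SeminormedAddCommGroup α] [SeminormedAddCommGroup β] :
    Tendsto (fun x : α => WithLp.toLp p (x, (0 : β))) (cobounded α)
      (cobounded (WithLp p (α × β))) := by
  simpa only [← tendsto_norm_atTop_iff_cobounded, WithLp.norm_toLp_fst]
    using tendsto_norm_cobounded_atTop

theorem elvis_exists_minimizer_general (F₀ F₁ : Set (WithLp 2 (ℝ × ℝ)))
    (hcv₀ : Convex ℝ F₀)
    (hbd₀ : Bornology.IsBounded F₀) (h0₀ : (0 : WithLp 2 (ℝ × ℝ)) ∈ interior F₀)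
    (hcv₁ : Convex ℝ F₁)
    (h0₁ : (0 : WithLp 2 (ℝ × ℝ)) ∈ interior F₁)
    (x₀ x₁ : WithLp 2 (ℝ × ℝ)) :
    ∃ y : ℝ, ∀ y' : ℝ,
      gauge F₀ ((WithLp.equiv 2 (ℝ × ℝ)).symm (y, 0) - x₀) + gauge F₁ (x₁ - (WithLp.equiv 2 (ℝ × ℝ)).symm (y, 0)) ≤
        gauge F₀ ((WithLp.equiv 2 (ℝ × ℝ)).symm (y', 0) - x₀) + gauge F₁ (x₁ - (WithLp.equiv 2 (ℝ × ℝ)).symm (y', 0)) := by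
  set axis : ℝ → WithLp 2 (ℝ × ℝ) := fun y => (WithLp.equiv 2 (ℝ × ℝ)).symm (y, 0)
  have hnhds₀ : F₀ ∈ 𝓝 0 := mem_interior_iff_mem_nhds.mp h0₀
  have hnhds₁ : F₁ ∈ 𝓝 0 := mem_interior_iff_mem_nhds.mp h0₁
  have haxis : Continuous axis :=
    (WithLp.prod_continuous_toLp 2 ℝ ℝ).comp (continuous_id.prodMk continuous_const)
  refine Continuous.exists_forall_le (f := fun y => gauge F₀ (axis y - x₀) + gauge F₁ (x₁ - axis y))
    (((continuous_gauge hcv₀ hnhds₀).comp (haxis.sub continuous_const)).add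
      ((continuous_gauge hcv₁ hnhds₁).comp (continuous_const.sub haxis))) ?_
  rw [← cobounded_eq_cocompact]
  have hcoercive₀ := (tendsto_gauge_cobounded hnhds₀ hbd₀).comp
    ((tendsto_sub_const_cobounded x₀).comp (WithLp.tendsto_toLp_fst_cobounded 2 ℝ ℝ))
  exact tendsto_atTop_add_right_of_le _ 0 hcoercive₀ fun _ => gauge_nonneg _

/-- The Elvis problem admits a minimizer on the x-axis Σ. -/
theorem elvis_exists_minimizer (F₀ F₁ : Set (WithLp 2 (ℝ × ℝ)))
    (hne₀ : F₀.Nonempty) (hcl₀ : IsClosed F₀) (hcv₀ : Convex ℝ F₀)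
    (hbd₀ : Bornology.IsBounded F₀) (h0₀ : (0 : WithLp 2 (ℝ × ℝ)) ∈ interior F₀)
    (hne₁ : F₁.Nonempty) (hcl₁ : IsClosed F₁) (hcv₁ : Convex ℝ F₁)
    (hbd₁ : Bornology.IsBounded F₁) (h0₁ : (0 : WithLp 2 (ℝ × ℝ)) ∈ interior F₁)
    (x₀ x₁ : WithLp 2 (ℝ × ℝ)) (hx₀ : x₀.ofLp.2 < 0) (hx₁ : 0 < x₁.ofLp.2) :
    ∃ y : ℝ, ∀ y' : ℝ,
      gauge F₀ ((WithLp.equiv 2 (ℝ × ℝ)).symm (y, 0) - x₀) + gauge F₁ (x₁ - (WithLp.equiv 2 (ℝ × ℝ)).symm (y, 0)) ≤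
        gauge F₀ ((WithLp.equiv 2 (ℝ × ℝ)).symm (y', 0) - x₀) + gauge F₁ (x₁ - (WithLp.equiv 2 (ℝ × ℝ)).symm (y', 0)) :=
  elvis_exists_minimizer_general F₀ F₁ hcv₀ hbd₀ h0₀ hcv₁ h0₁ x₀ x₁
end

section
/- (Sufficiency of generalized Snell's law) If y ∈ Σ and there exist ζ₀ ∈ ∂γ_{F₀}(y − x₀) and ζ₁ with −ζ₁ ∈ ∂γ_{F₁}(x₁ − y) such that ζ₀ + ζ₁ is orthogonal to Σ (its first coordinate vanishes), then y minimizes γ_{F₀}(y' − x₀) + γ_{F₁}(x₁ − y') over y' ∈ Σ. -/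
open RealInnerProductSpace

/-! Adding the two subgradient inequalities at `y' - x₀` and at `x₁ - y'` bounds the objective at
`y'` from below by its value at `y` plus `⟪ζ₀ + ζ₁, y' - y⟫`, and this pairing vanishes because
`ζ₀ + ζ₁` is normal to Σ while `y' - y` lies in Σ. -/

lemma WithLp.prod_inner_eq_zero_of_fst_eq_zero_of_snd_eq_zero {E F : Type*}
    [NormedAddCommGroup E] [InnerProductSpace ℝ E] [NormedAddCommGroup F] [InnerProductSpace ℝ F]
    {v w : WithLp 2 (E × F)} (hv : v.ofLp.1 = 0) (hw : w.ofLp.2 = 0) : ⟪v, w⟫ = 0 := by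
  rw [WithLp.prod_inner_apply, hv, hw, inner_zero_left, inner_zero_right, add_zero]

lemma add_le_add_of_subgradients {E : Type*} [NormedAddCommGroup E] [InnerProductSpace ℝ E]
    (f g : E → ℝ) {x₀ x₁ y y' ζ₀ ζ₁ : E}
    (hf : ∀ u, f (y - x₀) + ⟪ζ₀, u - (y - x₀)⟫ ≤ f u)
    (hg : ∀ u, g (x₁ - y) + ⟪-ζ₁, u - (x₁ - y)⟫ ≤ g u)
    (horth : ⟪ζ₀ + ζ₁, y' - y⟫ = 0) :
    f (y - x₀) + g (x₁ - y) ≤ f (y' - x₀) + g (x₁ - y') := by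
  have hf' := hf (y' - x₀)
  have hg' := hg (x₁ - y')
  rw [sub_sub_sub_cancel_right] at hf'
  rw [sub_sub_sub_cancel_left, inner_neg_left, inner_sub_right] at hg'
  rw [inner_add_left, inner_sub_right, inner_sub_right] at horth
  rw [inner_sub_right] at hf'
  linarith

theorem elvis_snell_sufficient_general (F₀ F₁ : Set (WithLp 2 (ℝ × ℝ)))
    (x₀ x₁ : WithLp 2 (ℝ × ℝ))
    (y : WithLp 2 (ℝ × ℝ)) (hy : y.ofLp.2 = 0) (ζ₀ ζ₁ : WithLp 2 (ℝ × ℝ))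
    (hζ₀ : ∀ u : WithLp 2 (ℝ × ℝ), gauge F₀ (y - x₀) + ⟪ζ₀, u - (y - x₀)⟫ ≤ gauge F₀ u)
    (hζ₁ : ∀ u : WithLp 2 (ℝ × ℝ), gauge F₁ (x₁ - y) + ⟪-ζ₁, u - (x₁ - y)⟫ ≤ gauge F₁ u)
    (hsnell : (ζ₀ + ζ₁).ofLp.1 = 0) :
    ∀ y' : WithLp 2 (ℝ × ℝ), y'.ofLp.2 = 0 →
      gauge F₀ (y - x₀) + gauge F₁ (x₁ - y) ≤ gauge F₀ (y' - x₀) + gauge F₁ (x₁ - y') := by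
  intro y' hy'
  have hdir : (y' - y).ofLp.2 = 0 := by rw [WithLp.ofLp_sub, Prod.snd_sub, hy, hy', sub_zero]
  exact add_le_add_of_subgradients _ _ hζ₀ hζ₁
    (WithLp.prod_inner_eq_zero_of_fst_eq_zero_of_snd_eq_zero hsnell hdir)

/-- Sufficiency of the generalized Snell law: if `ζ₀ ∈ ∂γ_{F₀}(y − x₀)`,
`−ζ₁ ∈ ∂γ_{F₁}(x₁ − y)` and the first coordinate of `ζ₀ + ζ₁` vanishes, then `y ∈ Σ`
minimizes the Elvis objective over Σ. -/
theorem elvis_snell_sufficient (F₀ F₁ : Set (WithLp 2 (ℝ × ℝ)))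
    (hne₀ : F₀.Nonempty) (hcl₀ : IsClosed F₀) (hcv₀ : Convex ℝ F₀)
    (hbd₀ : Bornology.IsBounded F₀) (h0₀ : (0 : WithLp 2 (ℝ × ℝ)) ∈ interior F₀)
    (hne₁ : F₁.Nonempty) (hcl₁ : IsClosed F₁) (hcv₁ : Convex ℝ F₁)
    (hbd₁ : Bornology.IsBounded F₁) (h0₁ : (0 : WithLp 2 (ℝ × ℝ)) ∈ interior F₁)
    (x₀ x₁ : WithLp 2 (ℝ × ℝ)) (hx₀ : x₀.ofLp.2 < 0) (hx₁ : 0 < x₁.ofLp.2)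
    (y : WithLp 2 (ℝ × ℝ)) (hy : y.ofLp.2 = 0) (ζ₀ ζ₁ : WithLp 2 (ℝ × ℝ))
    (hζ₀ : ∀ u : WithLp 2 (ℝ × ℝ), gauge F₀ (y - x₀) + ⟪ζ₀, u - (y - x₀)⟫ ≤ gauge F₀ u)
    (hζ₁ : ∀ u : WithLp 2 (ℝ × ℝ), gauge F₁ (x₁ - y) + ⟪-ζ₁, u - (x₁ - y)⟫ ≤ gauge F₁ u)
    (hsnell : (ζ₀ + ζ₁).ofLp.1 = 0) :
    ∀ y' : WithLp 2 (ℝ × ℝ), y'.ofLp.2 = 0 →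
      gauge F₀ (y - x₀) + gauge F₁ (x₁ - y) ≤ gauge F₀ (y' - x₀) + gauge F₁ (x₁ - y') :=
  elvis_snell_sufficient_general F₀ F₁ x₀ x₁ y hy ζ₀ ζ₁ hζ₀ hζ₁ hsnell
end

section
/- (Necessity of generalized Snell's law) If y ∈ Σ minimizes γ_{F₀}(y' − x₀) + γ_{F₁}(x₁ − y') over y' ∈ Σ, then there exist ζ₀ ∈ ∂γ_{F₀}(y − x₀) and ζ₁ with −ζ₁ ∈ ∂γ_{F₁}(x₁ − y) such that the first coordinate of ζ₀ + ζ₁ is zero. -/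
/-!
Restricted to the line `Σ`, the objective is a sum of two convex functions of one real variable
minimized at `y`. At such a minimizer the left derivatives sum to `≤ 0` and the right derivatives
to `≥ 0`, so a single slope `d` lies between the one-sided derivatives of the first summand while
`-d` lies between those of the second. Since `y - x₀` and `x₁ - y` are not horizontal, together
with the horizontal direction they span the plane, and positive homogeneity of a gauge extends
each of these one-dimensional subgradients to a subgradient in the plane whose first coordinate
is the slope: `d` for `ζ₀` and `-d` for `-ζ₁`.
-/

open RealInnerProductSpace Set Filter

local notation "ℝ²" => WithLp 2 (ℝ × ℝ)

section OneSidedDerivatives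

variable {h : ℝ → ℝ} {h' x : ℝ}

lemma IsLocalMin.hasDerivWithinAt_Ioi_nonneg (hmin : IsLocalMin h x)
    (hd : HasDerivWithinAt h h' (Ioi x) x) : 0 ≤ h' := by
  refine ge_of_tendsto ((hasDerivWithinAt_iff_tendsto_slope' self_notMem_Ioi).1 hd) ?_
  filter_upwards [nhdsWithin_le_nhds hmin, self_mem_nhdsWithin] with y hy (hxy : x < y)
  rw [slope_def_field]
  exact div_nonneg (sub_nonneg.2 hy) (sub_nonneg.2 hxy.le)

lemma IsLocalMin.hasDerivWithinAt_Iio_nonpos (hmin : IsLocalMin h x)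
    (hd : HasDerivWithinAt h h' (Iio x) x) : h' ≤ 0 := by
  refine le_of_tendsto ((hasDerivWithinAt_iff_tendsto_slope' self_notMem_Iio).1 hd) ?_
  filter_upwards [nhdsWithin_le_nhds hmin, self_mem_nhdsWithin] with y hy (hyx : y < x)
  rw [slope_def_field]
  exact div_nonpos_of_nonneg_of_nonpos (sub_nonneg.2 hy) (sub_nonpos.2 hyx.le)

end OneSidedDerivatives

namespace ConvexOn

variable {S : Set ℝ} {f g : ℝ → ℝ} {x d : ℝ}

lemma add_mul_sub_le_of_leftDeriv_le_of_le_rightDeriv (hf : ConvexOn ℝ S f)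
    (hx : x ∈ interior S) (hl : derivWithin f (Iio x) x ≤ d) (hr : d ≤ derivWithin f (Ioi x) x)
    {y : ℝ} (hy : y ∈ S) : f x + d * (y - x) ≤ f y := by
  rcases lt_trichotomy y x with hyx | rfl | hxy
  · have h := (hf.slope_le_leftDeriv_of_mem_interior hy hx hyx).trans hl
    rw [slope_def_field, div_le_iff₀ (sub_pos.2 hyx)] at h
    linarith
  · simp
  · have h := hr.trans (hf.rightDeriv_le_slope_of_mem_interior hx hy hxy)
    rw [slope_def_field, le_div_iff₀ (sub_pos.2 hxy)] at h
    linarith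

theorem exists_subgradients_of_isMinOn_add (hf : ConvexOn ℝ S f) (hg : ConvexOn ℝ S g)
    (hx : x ∈ interior S) (hmin : IsMinOn (f + g) S x) :
    ∃ d : ℝ, ∀ y ∈ S, f x + d * (y - x) ≤ f y ∧ g x - d * (y - x) ≤ g y := by
  have hloc : IsLocalMin (f + g) x := hmin.isLocalMin (mem_interior_iff_mem_nhds.1 hx)
  have hf_l := hf.hasDerivWithinAt_leftDeriv_of_mem_interior hx
  have hf_r := hf.hasDerivWithinAt_rightDeriv_of_mem_interior hx
  have hg_l := hg.hasDerivWithinAt_leftDeriv_of_mem_interior hx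
  have hg_r := hg.hasDerivWithinAt_rightDeriv_of_mem_interior hx
  have h_left := hloc.hasDerivWithinAt_Iio_nonpos (hf_l.add hg_l)
  have h_right := hloc.hasDerivWithinAt_Ioi_nonneg (hf_r.add hg_r)
  have hf_lr := hf.leftDeriv_le_rightDeriv_of_mem_interior hx
  have hg_lr := hg.leftDeriv_le_rightDeriv_of_mem_interior hx
  -- `f'₋ + g'₋ ≤ 0 ≤ f'₊ + g'₊` puts `max f'₋ (-g'₊)` in `[f'₋, f'₊]`
  -- and its negative in `[g'₋, g'₊]`.
  refine ⟨max (derivWithin f (Iio x) x) (-derivWithin g (Ioi x) x), fun y hy => ⟨?_, ?_⟩⟩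
  · exact hf.add_mul_sub_le_of_leftDeriv_le_of_le_rightDeriv hx (le_max_left _ _)
      (max_le hf_lr (by linarith)) hy
  · have := hg.add_mul_sub_le_of_leftDeriv_le_of_le_rightDeriv hx
      (d := -max (derivWithin f (Iio x) x) (-derivWithin g (Ioi x) x))
      (le_neg.2 (max_le (by linarith) (neg_le_neg hg_lr))) (neg_le.2 (le_max_right _ _)) hy
    linarith

end ConvexOn

section Gauge

variable {E : Type*} [AddCommGroup E] [Module ℝ E] {s : Set E}

lemma convexOn_gauge (hs : Convex ℝ s) (habs : Absorbent ℝ s) : ConvexOn ℝ univ (gauge s) :=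
  ⟨convex_univ, fun u _ v _ a b ha hb _ => (gauge_add_le hs habs _ _).trans_eq <| by
    rw [gauge_smul_of_nonneg ha, gauge_smul_of_nonneg hb]⟩

lemma convexOn_gauge_add_smul (hs : Convex ℝ s) (habs : Absorbent ℝ s) (p e : E) :
    ConvexOn ℝ univ (fun t : ℝ => gauge s (p + t • e)) :=
  ((convexOn_gauge hs habs).translate_right p).comp_linearMap (LinearMap.toSpanSingleton ℝ E e)

lemma le_gauge_of_mem_span_pair (hs : Convex ℝ s) (habs : Absorbent ℝ s) (ℓ : E →ₗ[ℝ] ℝ)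
    {p e : E} (hp : ℓ p = gauge s p) (he : ∀ t : ℝ, gauge s p + ℓ e * t ≤ gauge s (p + t • e))
    {u : E} (hu : u ∈ Submodule.span ℝ {p, e}) : ℓ u ≤ gauge s u := by
  obtain ⟨a, b, rfl⟩ := Submodule.mem_span_pair.1 hu
  rw [map_add, map_smul, map_smul, hp, smul_eq_mul, smul_eq_mul]
  rcases le_or_gt a 1 with ha | ha
  · have hsplit : gauge s (p + b • e) ≤ gauge s (a • p + b • e) + (1 - a) * gauge s p := by
      calc gauge s (p + b • e) = gauge s ((a • p + b • e) + (1 - a) • p) := by congr 1; module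
        _ ≤ gauge s (a • p + b • e) + gauge s ((1 - a) • p) := gauge_add_le hs habs _ _
        _ = gauge s (a • p + b • e) + (1 - a) * gauge s p := by
          rw [gauge_smul_of_nonneg (by linarith)]; rfl
    linarith [he b]
  · have ha₀ : 0 < a := by linarith
    calc a * gauge s p + b * ℓ e = a * (gauge s p + ℓ e * (b / a)) := by field_simp
      _ ≤ a * gauge s (p + (b / a) • e) := mul_le_mul_of_nonneg_left (he _) ha₀.le
      _ = gauge s (a • p + b • e) := by
        rw [← smul_eq_mul, ← gauge_smul_of_nonneg ha₀.le, smul_add, smul_smul,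
          mul_div_cancel₀ _ ha₀.ne']

end Gauge

namespace WithLp

lemma prod_inner_toLp_one_zero (ζ : ℝ²) : ⟪ζ, toLp 2 ((1 : ℝ), (0 : ℝ))⟫ = ζ.ofLp.1 := by
  simp [prod_inner_apply]

lemma prod_mem_span_pair_toLp_one_zero {p : ℝ²} (hp : p.ofLp.2 ≠ 0) (u : ℝ²) :
    u ∈ Submodule.span ℝ {p, toLp 2 ((1 : ℝ), (0 : ℝ))} := by
  refine Submodule.mem_span_pair.2
    ⟨u.ofLp.2 / p.ofLp.2, u.ofLp.1 - p.ofLp.1 * (u.ofLp.2 / p.ofLp.2), ?_⟩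
  apply ofLp_injective
  ext
  · simp [-ofLp_fst, -ofLp_snd]; field_simp; ring
  · simp [-ofLp_fst, -ofLp_snd]; field_simp

lemma prod_exists_inner_eq_of_snd_ne_zero {p : ℝ²} (hp : p.ofLp.2 ≠ 0) (c d : ℝ) :
    ∃ ζ : ℝ², ⟪ζ, p⟫ = c ∧ ζ.ofLp.1 = d :=
  ⟨toLp 2 (d, (c - d * p.ofLp.1) / p.ofLp.2), by
    simp [prod_inner_apply, -ofLp_fst, -ofLp_snd]; field_simp; ring, rfl⟩

end WithLp

theorem exists_subgradient_gauge_of_horizontal {s : Set ℝ²} (hs : Convex ℝ s)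
    (habs : Absorbent ℝ s) {p : ℝ²} (hp : p.ofLp.2 ≠ 0) {d : ℝ}
    (hd : ∀ t : ℝ, gauge s p + d * t ≤ gauge s (p + t • WithLp.toLp 2 ((1 : ℝ), (0 : ℝ)))) :
    ∃ ζ : ℝ², ζ.ofLp.1 = d ∧ ∀ u, gauge s p + ⟪ζ, u - p⟫ ≤ gauge s u := by
  obtain ⟨ζ, hζp, rfl⟩ := WithLp.prod_exists_inner_eq_of_snd_ne_zero hp (gauge s p) d
  refine ⟨ζ, rfl, fun u => ?_⟩
  have := le_gauge_of_mem_span_pair hs habs (innerₛₗ ℝ ζ) hζp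
    (by simpa only [coe_innerₛₗ_apply, WithLp.prod_inner_toLp_one_zero] using hd)
    (WithLp.prod_mem_span_pair_toLp_one_zero hp u)
  rw [inner_sub_right, hζp]
  simpa using this

theorem elvis_snell_necessary_general (F₀ F₁ : Set (WithLp 2 (ℝ × ℝ)))
    (hcv₀ : Convex ℝ F₀) (h0₀ : (0 : WithLp 2 (ℝ × ℝ)) ∈ interior F₀)
    (hcv₁ : Convex ℝ F₁) (h0₁ : (0 : WithLp 2 (ℝ × ℝ)) ∈ interior F₁)
    (x₀ x₁ : WithLp 2 (ℝ × ℝ)) (hx₀ : x₀.ofLp.2 < 0) (hx₁ : 0 < x₁.ofLp.2)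
    (y : WithLp 2 (ℝ × ℝ)) (hy : y.ofLp.2 = 0)
    (hmin : ∀ y' : WithLp 2 (ℝ × ℝ), y'.ofLp.2 = 0 →
      gauge F₀ (y - x₀) + gauge F₁ (x₁ - y) ≤ gauge F₀ (y' - x₀) + gauge F₁ (x₁ - y')) :
    ∃ ζ₀ ζ₁ : WithLp 2 (ℝ × ℝ),
      (∀ u : WithLp 2 (ℝ × ℝ), gauge F₀ (y - x₀) + ⟪ζ₀, u - (y - x₀)⟫ ≤ gauge F₀ u) ∧
      (∀ u : WithLp 2 (ℝ × ℝ), gauge F₁ (x₁ - y) + ⟪-ζ₁, u - (x₁ - y)⟫ ≤ gauge F₁ u) ∧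
      (ζ₀ + ζ₁).ofLp.1 = 0 := by
  have habs₀ : Absorbent ℝ F₀ := absorbent_nhds_zero (mem_interior_iff_mem_nhds.1 h0₀)
  have habs₁ : Absorbent ℝ F₁ := absorbent_nhds_zero (mem_interior_iff_mem_nhds.1 h0₁)
  set e : WithLp 2 (ℝ × ℝ) := WithLp.toLp 2 (1, 0)
  have hline : IsMinOn ((fun t : ℝ => gauge F₀ (y - x₀ + t • e)) +
      fun t : ℝ => gauge F₁ (x₁ - y + t • -e)) univ 0 := fun t _ => by
    have h := hmin (y + t • e) (by simp [e, hy, -WithLp.ofLp_snd])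
    rw [show y + t • e - x₀ = y - x₀ + t • e by abel,
      show x₁ - (y + t • e) = x₁ - y + t • -e by module] at h
    simpa only [mem_ofPred_eq, Pi.add_apply, zero_smul, add_zero] using h
  obtain ⟨d, hd⟩ := (convexOn_gauge_add_smul hcv₀ habs₀ _ e).exists_subgradients_of_isMinOn_add
    (convexOn_gauge_add_smul hcv₁ habs₁ _ (-e)) (by simp) hline
  obtain ⟨ζ₀, hζ₀, hsub₀⟩ := exists_subgradient_gauge_of_horizontal hcv₀ habs₀
    (p := y - x₀) (d := d) (by simp [hy, hx₀.ne, -WithLp.ofLp_snd])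
    fun t => by simpa using (hd t trivial).1
  obtain ⟨η, hη, hsub₁⟩ := exists_subgradient_gauge_of_horizontal hcv₁ habs₁
    (p := x₁ - y) (d := d) (by simp [hy, hx₁.ne', -WithLp.ofLp_snd])
    fun t => by simpa using (hd (-t) trivial).2
  exact ⟨ζ₀, -η, hsub₀, by simpa using hsub₁, by simp [hζ₀, hη, -WithLp.ofLp_fst]⟩

/-- Necessity of the generalized Snell law: if `y ∈ Σ` minimizes the Elvis objective over Σ,
then there exist `ζ₀ ∈ ∂γ_{F₀}(y − x₀)` and `ζ₁` with `−ζ₁ ∈ ∂γ_{F₁}(x₁ − y)` such that the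
first coordinate of `ζ₀ + ζ₁` is zero. -/
theorem elvis_snell_necessary (F₀ F₁ : Set (WithLp 2 (ℝ × ℝ)))
    (hne₀ : F₀.Nonempty) (hcl₀ : IsClosed F₀) (hcv₀ : Convex ℝ F₀)
    (hbd₀ : Bornology.IsBounded F₀) (h0₀ : (0 : WithLp 2 (ℝ × ℝ)) ∈ interior F₀)
    (hne₁ : F₁.Nonempty) (hcl₁ : IsClosed F₁) (hcv₁ : Convex ℝ F₁)
    (hbd₁ : Bornology.IsBounded F₁) (h0₁ : (0 : WithLp 2 (ℝ × ℝ)) ∈ interior F₁)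
    (x₀ x₁ : WithLp 2 (ℝ × ℝ)) (hx₀ : x₀.ofLp.2 < 0) (hx₁ : 0 < x₁.ofLp.2)
    (y : WithLp 2 (ℝ × ℝ)) (hy : y.ofLp.2 = 0)
    (hmin : ∀ y' : WithLp 2 (ℝ × ℝ), y'.ofLp.2 = 0 →
      gauge F₀ (y - x₀) + gauge F₁ (x₁ - y) ≤ gauge F₀ (y' - x₀) + gauge F₁ (x₁ - y')) :
    ∃ ζ₀ ζ₁ : WithLp 2 (ℝ × ℝ),
      (∀ u : WithLp 2 (ℝ × ℝ), gauge F₀ (y - x₀) + ⟪ζ₀, u - (y - x₀)⟫ ≤ gauge F₀ u) ∧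
      (∀ u : WithLp 2 (ℝ × ℝ), gauge F₁ (x₁ - y) + ⟪-ζ₁, u - (x₁ - y)⟫ ≤ gauge F₁ u) ∧
      (ζ₀ + ζ₁).ofLp.1 = 0 :=
  elvis_snell_necessary_general F₀ F₁ hcv₀ h0₀ hcv₁ h0₁ x₀ x₁ hx₀ hx₁ y hy hmin
end

section
/- (Classical Snell's law) Let F₀ = r₀·B and F₁ = r₁·B be balls with r₀, r₁ > 0. If y ∈ Σ minimizes |y − x₀|/r₀ + |x₁ − y|/r₁ over Σ, then sin(θ₀)/r₀ = sin(θ₁)/r₁, where θ₀ and θ₁ are the angles that y − x₀ and x₁ − y make with the vertical direction, i.e. sin(θᵢ) is the ratio of the horizontal component to the norm of the corresponding vector. -/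
/-! Restrict the optical length to the line `Σ` through `y`: it is differentiable at `y` because
`y` differs from `x₀` and `x₁`, so Fermat's rule applies, and the derivative of `‖v‖` in the
direction `e` is `⟪v, e⟫ / ‖v‖`, which for `e = (1, 0)` is the horizontal sine. -/

open RealInnerProductSpace

theorem HasDerivAt.norm {F : Type*} [NormedAddCommGroup F] [InnerProductSpace ℝ F]
    {f : ℝ → F} {f' : F} {x : ℝ} (hf : HasDerivAt f f' x) (h0 : f x ≠ 0) :
    HasDerivAt (fun t => ‖f t‖) (⟪f x, f'⟫ / ‖f x‖) x := by
  have hsqrt := hf.norm_sq.sqrt (by positivity)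
  simp only [Real.sqrt_sq (norm_nonneg _)] at hsqrt
  convert hsqrt using 1
  field_simp

theorem snell_law_of_isLocalMin_line {E : Type*} [NormedAddCommGroup E] [InnerProductSpace ℝ E]
    {p q y e : E} {r₀ r₁ : ℝ} (hp : y ≠ p) (hq : q ≠ y)
    (hmin : IsLocalMin (fun t : ℝ => ‖y + t • e - p‖ / r₀ + ‖q - (y + t • e)‖ / r₁) 0) :
    ⟪y - p, e⟫ / ‖y - p‖ / r₀ = ⟪q - y, e⟫ / ‖q - y‖ / r₁ := by
  have hline : HasDerivAt (fun t : ℝ => y + t • e) e 0 := by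
    simpa using ((hasDerivAt_id (0 : ℝ)).smul_const e).const_add y
  have h₀ := ((hline.sub_const p).norm (by simpa [sub_ne_zero] using hp)).div_const r₀
  have h₁ := ((hline.const_sub q).norm (by simpa [sub_ne_zero] using hq)).div_const r₁
  have hcrit := hmin.hasDerivAt_eq_zero (h₀.add h₁)
  simp only [zero_smul, add_zero, inner_neg_right, neg_div] at hcrit
  linarith

theorem WithLp.prod_inner_toLp_one_zero_s16 (v : WithLp 2 (ℝ × ℝ)) :
    ⟪v, WithLp.toLp 2 (1, 0)⟫ = v.ofLp.1 := by
  simp [WithLp.prod_inner_apply]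

theorem classical_snell_general (r₀ r₁ : ℝ)
    (x₀ x₁ : WithLp 2 (ℝ × ℝ)) (hx₀ : x₀.ofLp.2 < 0) (hx₁ : 0 < x₁.ofLp.2)
    (y : WithLp 2 (ℝ × ℝ)) (hy : y.ofLp.2 = 0)
    (hmin : ∀ y' : WithLp 2 (ℝ × ℝ), y'.ofLp.2 = 0 →
      ‖y - x₀‖ / r₀ + ‖x₁ - y‖ / r₁ ≤ ‖y' - x₀‖ / r₀ + ‖x₁ - y'‖ / r₁) :
    ((y - x₀).ofLp.1 / ‖y - x₀‖) / r₀ = ((x₁ - y).ofLp.1 / ‖x₁ - y‖) / r₁ := by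
  have hy₀ : y ≠ x₀ := by rintro rfl; linarith
  have hy₁ : x₁ ≠ y := by rintro rfl; linarith
  have hline : IsLocalMin (fun t : ℝ =>
      ‖y + t • WithLp.toLp 2 (1, 0) - x₀‖ / r₀ + ‖x₁ - (y + t • WithLp.toLp 2 (1, 0))‖ / r₁) 0 := by
    refine IsMinOn.isLocalMin (fun t _ => ?_) Filter.univ_mem
    simpa using hmin (y + t • WithLp.toLp 2 (1, 0)) (by simpa using hy)
  simpa only [WithLp.prod_inner_toLp_one_zero_s16] using snell_law_of_isLocalMin_line hy₀ hy₁ hline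

/-- Classical Snell's law: if `y ∈ Σ` minimizes `‖y − x₀‖/r₀ + ‖x₁ − y‖/r₁` over the x-axis,
then `sin θ₀ / r₀ = sin θ₁ / r₁`, where `sin θᵢ` is the ratio of the horizontal component
to the norm of the corresponding vector. -/
theorem classical_snell (r₀ r₁ : ℝ) (hr₀ : 0 < r₀) (hr₁ : 0 < r₁)
    (x₀ x₁ : WithLp 2 (ℝ × ℝ)) (hx₀ : x₀.ofLp.2 < 0) (hx₁ : 0 < x₁.ofLp.2)
    (y : WithLp 2 (ℝ × ℝ)) (hy : y.ofLp.2 = 0)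
    (hmin : ∀ y' : WithLp 2 (ℝ × ℝ), y'.ofLp.2 = 0 →
      ‖y - x₀‖ / r₀ + ‖x₁ - y‖ / r₁ ≤ ‖y' - x₀‖ / r₀ + ‖x₁ - y'‖ / r₁) :
    ((y - x₀).ofLp.1 / ‖y - x₀‖) / r₀ = ((x₁ - y).ofLp.1 / ‖x₁ - y‖) / r₁ :=
  classical_snell_general r₀ r₁ x₀ x₁ hx₀ hx₁ y hy hmin
end
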